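/- Let N and M be well-formed labeled portnets and let (M,φ) be a partial mirror of N. Let S = compose({N,M}) with initial marking i_S = i_N + i_M. For any markings m, m', m_0, …, m_n reachable from i_S and all transitions t, t_1, …, t_n of N such that m = m_0 →t_1 … →t_n m_n, where each λ(t_i) = receive, and m →t m' with λ(t) = send, there exist markings m_0', …, m_n' reachable from i_S and transitions t̄, t_1', …, t_n' of N such that m' = m_0' →t_1' … →t_n' m_n' and m_n →t̄ m_n', with μ(t_i) = μ(t_i') and λ(t_i) = λ(t_i') for all i, and μ(t) = μ(t̄) and λ(t) = λ(t̄). -/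

import Mathlib

namespace PortNets

/-- Direction of communication of a transition: send, receive, or internal (τ). -/
inductive Dir : Type
  | send | receive | tau
deriving DecidableEq

/-- Preset of a node `x` with respect to a flow relation `F`. -/
def pre {Node : Type} (F : Set (Node × Node)) (x : Node) : Set Node := {y | (y, x) ∈ F}

/-- Postset of a node `x` with respect to a flow relation `F`. -/
def post {Node : Type} (F : Set (Node × Node)) (x : Node) : Set Node := {y | (x, y) ∈ F}

/-- Raw data of an open Petri net (with labels): internal places `P`, input places `I`,
output places `O`, transitions `T`, flow `F`, initial and final places, labeling `μ`. -/
structure OPN (Node L : Type) where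
  P : Set Node
  I : Set Node
  O : Set Node
  T : Set Node
  F : Set (Node × Node)
  init : Set Node
  fin : Set Node
  μ : Node → L

variable {Node L : Type}

/-- All places of an OPN. -/
def OPN.places (N : OPN Node L) : Set Node := N.P ∪ N.I ∪ N.O

/-- All nodes of an OPN. -/
def OPN.nodes (N : OPN Node L) : Set Node := N.places ∪ N.T

/-- Structural requirements of an open Petri net. -/
structure IsOPN (N : OPN Node L) : Prop where
  disjPI : N.P ∩ N.I = ∅
  disjPO : N.P ∩ N.O = ∅
  disjIO : N.I ∩ N.O = ∅
  disjPT : N.places ∩ N.T = ∅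
  flow_sub : N.F ⊆ (N.places ×ˢ N.T) ∪ (N.T ×ˢ N.places)
  no_pre_I : ∀ x ∈ N.I, pre N.F x = ∅
  no_post_O : ∀ x ∈ N.O, post N.F x = ∅
  not_both : ∀ t ∈ N.T, ¬((pre N.F t ∩ N.I).Nonempty ∧ (post N.F t ∩ N.O).Nonempty)
  init_sub : N.init ⊆ N.P
  fin_sub : N.fin ⊆ N.P

open Classical in
noncomputable def dir (N : OPN Node L) (t : Node) : Dir :=
  if (post N.F t ∩ N.O).Nonempty then Dir.send
  else if (pre N.F t ∩ N.I).Nonempty then Dir.receive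
  else Dir.tau

open Classical in
noncomputable def fireAt (F : Set (Node × Node)) (m : Node → ℕ) (t : Node) : Node → ℕ :=
  fun p => m p - (if (p, t) ∈ F then 1 else 0) + (if (t, p) ∈ F then 1 else 0)

/-- `Fires T F m t m'`: transition `t` is enabled in marking `m` and firing it yields `m'`. -/
def Fires (T : Set Node) (F : Set (Node × Node)) (m : Node → ℕ) (t : Node)
    (m' : Node → ℕ) : Prop :=
  t ∈ T ∧ (∀ p, (p, t) ∈ F → 1 ≤ m p) ∧ m' = fireAt F m t

/-- Firing a finite sequence of transitions. -/
inductive FireSeq (T : Set Node) (F : Set (Node × Node)) :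
    (Node → ℕ) → List Node → (Node → ℕ) → Prop
  | nil (m : Node → ℕ) : FireSeq T F m [] m
  | cons {m m' m'' : Node → ℕ} {t : Node} {σ : List Node} :
      Fires T F m t m' → FireSeq T F m' σ m'' → FireSeq T F m (t :: σ) m''

/-- Reachability of markings. -/
def Reach (T : Set Node) (F : Set (Node × Node)) (m m' : Node → ℕ) : Prop :=
  ∃ σ : List Node, FireSeq T F m σ m'

/-- Weak termination: from every marking reachable from `m0`, the marking `mf` is reachable. -/
def WeaklyTerminates (T : Set Node) (F : Set (Node × Node)) (m0 mf : Node → ℕ) : Prop :=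
  ∀ m, Reach T F m0 m → Reach T F m mf

/-- The marking putting one token on each element of a set of places. -/
noncomputable def mark (s : Set Node) : Node → ℕ := s.indicator fun _ => 1

/-- Flow relation of the skeleton: all arcs not adjacent to interface places. -/
def skF (N : OPN Node L) : Set (Node × Node) :=
  {x ∈ N.F | x.1 ∉ N.I ∪ N.O ∧ x.2 ∉ N.I ∪ N.O}

/-- The skeleton is a state machine: each transition has at most one place in its
preset and at most one in its postset. -/
def IsSM (N : OPN Node L) : Prop :=
  ∀ t ∈ N.T, (pre (skF N) t).Subsingleton ∧ (post (skF N) t).Subsingleton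

/-- `x` lies on a path from `i` to `f` w.r.t. flow `F`. -/
def OnPath (F : Set (Node × Node)) (i f x : Node) : Prop :=
  ∃ l : List Node, l ≠ [] ∧ List.Chain' (fun a b => (a, b) ∈ F) l ∧
    l.head? = some i ∧ l.getLast? = some f ∧ x ∈ l

/-- Workflow net (with places `P`, transitions `T`, flow `F`): `i` is the unique place with
empty preset, `f` the unique place with empty postset, and every node is on a path
from `i` to `f`. -/
def IsWFNOn (P T : Set Node) (F : Set (Node × Node)) (i f : Node) : Prop :=
  i ∈ P ∧ f ∈ P ∧ pre F i = ∅ ∧ post F f = ∅ ∧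
    (∀ p ∈ P, pre F p = ∅ → p = i) ∧
    (∀ p ∈ P, post F p = ∅ → p = f) ∧
    (∀ x ∈ P ∪ T, OnPath F i f x)

/-- Transition `t` is connected (by an arc, in either direction) to node `x`. -/
def connected (N : OPN Node L) (t x : Node) : Prop := (x, t) ∈ N.F ∨ (t, x) ∈ N.F

/-- A labeled portnet: an OPN whose skeleton is a state-machine workflow net, with
singleton `init` and `fin`, every transition connected to exactly one interface place,
transitions sharing an interface place sharing a label, and transitions sharing a
label sharing their interface place connections. -/
structure IsPortnet (N : OPN Node L) : Prop where
  isOPN : IsOPN N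
  isSM : IsSM N
  init_single : ∃ i, N.init = {i}
  fin_single : ∃ f, N.fin = {f}
  isWFN : ∀ i f, N.init = {i} → N.fin = {f} → IsWFNOn N.P N.T (skF N) i f
  one_iface : ∀ t ∈ N.T, ∃! x, x ∈ N.I ∪ N.O ∧ connected N t x
  same_iface_label : ∀ x ∈ N.I ∪ N.O, ∀ t t', t ∈ N.T → t' ∈ N.T →
    connected N t x → connected N t' x → N.μ t = N.μ t'
  same_label_iface : ∀ t ∈ N.T, ∀ t' ∈ N.T, N.μ t = N.μ t' →
    ∀ x ∈ N.I ∪ N.O, (connected N t x ↔ connected N t' x)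

/-- Observable choices: distinct transitions in the postset of a place have distinct labels. -/
def ObservableChoices (N : OPN Node L) : Prop :=
  ∀ p ∈ N.P, ∀ t ∈ post N.F p, ∀ t' ∈ post N.F p, t ≠ t' → N.μ t ≠ N.μ t'

/-- Choice property: all transitions in the postset of a place have the same direction. -/
def ChoiceProp (N : OPN Node L) : Prop :=
  ∀ p ∈ N.P, ∀ t ∈ post N.F p, ∀ t' ∈ post N.F p, dir N t = dir N t'

/-- Diamond property. -/
def DiamondProp (N : OPN Node L) : Prop :=
  ∀ p ∈ N.P, ∀ t ∈ post N.F p, ∀ t' ∈ post N.F p, dir N t ≠ dir N t' →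
    ∀ q ∈ post (skF N) t, ∀ q' ∈ post (skF N) t',
      ∃ u ∈ post (skF N) q, ∃ u' ∈ post (skF N) q',
        (post (skF N) u ∩ post (skF N) u').Nonempty ∧
        N.μ t = N.μ u' ∧ N.μ t' = N.μ u

/-- Loop property. -/
def LoopProp (N : OPN Node L) : Prop :=
  ∀ p ∈ N.P, ∀ t ∈ post N.F p, ∀ t' ∈ post N.F p, t ≠ t' → dir N t = dir N t' →
    ∀ (l : List Node) (t'' : Node),
      List.Chain' (fun a b => (a, b) ∈ N.F) (p :: t :: (l ++ [t''])) →
      t'' ∈ N.T → N.μ t'' = N.μ t' →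
      (∀ u ∈ l, u ∈ N.T → N.μ u ≠ N.μ t') →
      ∃ v ∈ t :: (l ++ [t'']), v ∈ N.T ∧ dir N v ≠ dir N t

/-- Well-formed labeled portnet. -/
def WellFormed (N : OPN Node L) : Prop :=
  IsPortnet N ∧ ObservableChoices N ∧ DiamondProp N ∧ LoopProp N

/-- `(M, φ)` is a partial mirror of the labeled portnet `N`. -/
structure IsPartialMirror (N M : OPN Node L) (φ : Node → Node) : Prop where
  portN : IsPortnet N
  portM : IsPortnet M
  inj : Set.InjOn φ M.nodes
  mapsP : ∀ x ∈ M.P, φ x ∈ N.P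
  mapsT : ∀ x ∈ M.T, φ x ∈ N.T
  mapsI : ∀ x ∈ M.I, φ x ∈ N.O
  mapsO : ∀ x ∈ M.O, φ x ∈ N.I
  flow_same : ∀ x y, (x, y) ∈ M.F → x ∉ M.I → y ∉ M.O → (φ x, φ y) ∈ N.F
  flow_rev : ∀ x y, (x, y) ∈ M.F → (x ∈ M.I ∨ y ∈ M.O) → (φ y, φ x) ∈ N.F
  init_eq : φ '' M.init = N.init
  fin_eq : φ '' M.fin = N.fin
  lab : ∀ t ∈ M.T, M.μ t = N.μ (φ t)
  send_cover : ∀ p ∈ M.P, ∀ t, (φ p, t) ∈ N.F → dir N t = Dir.send →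
    ∃ t', (p, t') ∈ M.F ∧ φ t' = t

/-- Composability of two OPNs. -/
def Composable (N M : OPN Node L) : Prop :=
  (N.nodes ∩ M.nodes = (N.I ∪ N.O) ∩ (M.I ∪ M.O)) ∧
  (((N.I ∩ M.O) ∪ (M.I ∩ N.O)).Nonempty →
    N.O ⊆ M.I ∧ M.O ⊆ N.I ∧ N.I ∩ M.I = ∅ ∧ N.O ∩ M.O = ∅)

open Classical in
noncomputable def compose2 (N M : OPN Node L) : OPN Node L where
  P := N.P ∪ M.P ∪ ((N.I ∪ M.I) ∩ (N.O ∪ M.O))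
  I := (N.I ∪ M.I) \ (N.O ∪ M.O)
  O := (N.O ∪ M.O) \ (N.I ∪ M.I)
  T := N.T ∪ M.T
  F := N.F ∪ M.F
  init := N.init ∪ M.init
  fin := N.fin ∪ M.fin
  μ := fun x => if x ∈ N.T then N.μ x else M.μ x

end PortNets

/-! Induction on the receive sequence `t₁ … tₙ`. The first receive `t₁` and the send `t` are both
enabled in `m`. If they share no input place they commute. Otherwise they compete for a skeleton
place `p` of `N`, and the diamond property gives `u` (labelled like `t₁`) and `u'` (labelled like
`t`) such that `t` then `u` and `t₁` then `u'` have the same effect on the marking; `u` is enabled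
after `t` because the send leaves the interface token of `t₁` in place. Either way the send moves
one step past a receive, and the induction hypothesis applies to the rest of the sequence. -/

namespace PortNets

variable {Node L : Type}

theorem _root_.List.IsChain.exists_rel_of_mem {α : Type*} {R : α → α → Prop} {l : List α}
    {x : α} (h : l.IsChain R) (hx : x ∈ l) (hlast : l.getLast? ≠ some x) : ∃ y, R x y := by
  obtain ⟨s, u, rfl⟩ := List.append_of_mem hx
  cases u with
  | nil => simp at hlast
  | cons y u => exact ⟨y, List.isChain_iff_forall_rel_of_append_cons_cons.mp h rfl⟩

section Firing

variable {T : Set Node} {F : Set (Node × Node)} {m m' m₁ m₂ m₁' m₂' : Node → ℕ}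
  {t t' u u' p : Node}

open Classical in
noncomputable def effect (F : Set (Node × Node)) (t p : Node) : ℤ :=
  (if (t, p) ∈ F then 1 else 0) - (if (p, t) ∈ F then 1 else 0)

theorem Fires.coe_apply (h : Fires T F m t m') (p : Node) :
    (m' p : ℤ) = m p + effect F t p := by
  obtain ⟨-, hen, rfl⟩ := h
  simp only [fireAt, effect]
  by_cases hpt : (p, t) ∈ F
  · have := hen p hpt
    split_ifs <;> omega
  · split_ifs <;> omega

theorem Fires.eq_of_effect_eq (h₁ : Fires T F m t m₁) (h₂ : Fires T F m₁ u m₂)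
    (h₁' : Fires T F m t' m₁') (h₂' : Fires T F m₁' u' m₂')
    (heff : ∀ p, effect F t p + effect F u p = effect F t' p + effect F u' p) : m₂ = m₂' := by
  funext p
  have : (m₂ p : ℤ) = m₂' p := by
    rw [h₂.coe_apply, h₁.coe_apply, h₂'.coe_apply, h₁'.coe_apply]
    linarith [heff p]
  exact_mod_cast this

theorem one_le_fireAt_of_mem (h : (t, p) ∈ F) : 1 ≤ fireAt F m t p := by
  simp [fireAt, h]

theorem le_fireAt_of_notMem (h : (p, t) ∉ F) : m p ≤ fireAt F m t p := by
  simp [fireAt, h]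

theorem Fires.fires_fireAt (h : Fires T F m t m₁) (h' : Fires T F m t' m₁') (hu : u ∈ T)
    (hpre : ∀ p, (p, u) ∈ F → (t, p) ∈ F ∨ ((p, t') ∈ F ∧ (p, t) ∉ F)) :
    Fires T F m₁ u (fireAt F m₁ u) := by
  refine ⟨hu, fun p hp => ?_, rfl⟩
  rw [h.2.2]
  rcases hpre p hp with hp' | ⟨hp', hpt⟩
  · exact one_le_fireAt_of_mem hp'
  · exact (h'.2.1 p hp').trans (le_fireAt_of_notMem hpt)

theorem Fires.exists_join (h : Fires T F m t m₁) (h' : Fires T F m t' m₁') (hu : u ∈ T)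
    (hu' : u' ∈ T) (hpre : ∀ p, (p, u) ∈ F → (t, p) ∈ F ∨ ((p, t') ∈ F ∧ (p, t) ∉ F))
    (hpre' : ∀ p, (p, u') ∈ F → (t', p) ∈ F ∨ ((p, t) ∈ F ∧ (p, t') ∉ F))
    (heff : ∀ p, effect F t p + effect F u p = effect F t' p + effect F u' p) :
    ∃ m₂, Fires T F m₁ u m₂ ∧ Fires T F m₁' u' m₂ := by
  have h₂ := h.fires_fireAt h' hu hpre
  have h₂' := h'.fires_fireAt h hu' hpre'
  exact ⟨_, h₂, h.eq_of_effect_eq h₂ h' h₂' heff ▸ h₂'⟩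

theorem Fires.exists_comm (h : Fires T F m t m₁) (h' : Fires T F m t' m₁')
    (hdisj : ∀ p, (p, t) ∈ F → (p, t') ∉ F) :
    ∃ m₂, Fires T F m₁ t' m₂ ∧ Fires T F m₁' t m₂ :=
  h.exists_join h' h'.1 h.1 (fun p hp => Or.inr ⟨hp, fun hpt => hdisj p hpt hp⟩)
    (fun p hp => Or.inr ⟨hp, hdisj p hp⟩) (fun _ => add_comm _ _)

end Firing

section OpenNets

variable {N M : OPN Node L} {v a b c x y z : Node}

theorem IsOPN.notMem_places (hN : IsOPN N) (hv : v ∈ N.T) : v ∉ N.places :=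
  fun hp => (Set.eq_empty_iff_forall_notMem.mp hN.disjPT) v ⟨hp, hv⟩

theorem IsOPN.mem_places_of_mem_F (hN : IsOPN N) (hv : v ∈ N.T) (h : (v, b) ∈ N.F) :
    b ∈ N.places := by
  rcases hN.flow_sub h with h | h
  · exact absurd h.1 (hN.notMem_places hv)
  · exact h.2

theorem IsOPN.mem_T_of_mem_F (hN : IsOPN N) (hb : b ∈ N.places) (h : (b, v) ∈ N.F) :
    v ∈ N.T := by
  rcases hN.flow_sub h with h | h
  · exact h.2
  · exact absurd hb (hN.notMem_places h.1)

theorem IsOPN.notMem_iface_of_mem_P (hN : IsOPN N) (ha : a ∈ N.P) : a ∉ N.I ∪ N.O := by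
  rintro (h | h)
  · exact (Set.eq_empty_iff_forall_notMem.mp hN.disjPI) a ⟨ha, h⟩
  · exact (Set.eq_empty_iff_forall_notMem.mp hN.disjPO) a ⟨ha, h⟩

theorem IsOPN.notMem_O_of_mem_I (hN : IsOPN N) (hx : x ∈ N.I) : x ∉ N.O :=
  fun h => (Set.eq_empty_iff_forall_notMem.mp hN.disjIO) x ⟨hx, h⟩

theorem IsOPN.notMem_iface_of_mem_T (hN : IsOPN N) (hv : v ∈ N.T) : v ∉ N.I ∪ N.O := by
  rintro (h | h) <;> exact hN.notMem_places hv (by simp [OPN.places, h])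

theorem IsOPN.mem_P_of_mem_F_left (hN : IsOPN N) (hv : v ∈ N.T) (h : (a, v) ∈ N.F)
    (haI : a ∉ N.I) : a ∈ N.P := by
  rcases hN.flow_sub h with ⟨(haP | haI') | haO, -⟩ | h
  · exact haP
  · exact absurd haI' haI
  · exact absurd (show v ∈ post N.F a from h) (by simp [hN.no_post_O a haO])
  · exact absurd h.2 (hN.notMem_places hv)

theorem IsOPN.mem_P_of_mem_F_right (hN : IsOPN N) (hv : v ∈ N.T) (h : (v, b) ∈ N.F)
    (hbO : b ∉ N.O) : b ∈ N.P := by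
  rcases hN.flow_sub h with h | ⟨-, (hbP | hbI) | hbO'⟩
  · exact absurd h.1 (hN.notMem_places hv)
  · exact hbP
  · exact absurd (show v ∈ pre N.F b from h) (by simp [hN.no_pre_I b hbI])
  · exact absurd hbO' hbO

theorem IsOPN.mem_skF_or_mem_I (hN : IsOPN N) (hv : v ∈ N.T) (h : (z, v) ∈ N.F) :
    (z, v) ∈ skF N ∨ z ∈ N.I := by
  by_cases hzI : z ∈ N.I
  · exact Or.inr hzI
  · exact Or.inl ⟨h, hN.notMem_iface_of_mem_P (hN.mem_P_of_mem_F_left hv h hzI),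
      hN.notMem_iface_of_mem_T hv⟩

theorem IsOPN.mem_skF_or_mem_O (hN : IsOPN N) (hv : v ∈ N.T) (h : (v, z) ∈ N.F) :
    (v, z) ∈ skF N ∨ z ∈ N.O := by
  by_cases hzO : z ∈ N.O
  · exact Or.inr hzO
  · exact Or.inl ⟨h, hN.notMem_iface_of_mem_T hv,
      hN.notMem_iface_of_mem_P (hN.mem_P_of_mem_F_right hv h hzO)⟩

theorem IsOPN.mem_F_of_connected_of_mem_I (hN : IsOPN N) (hvx : connected N v x)
    (hx : x ∈ N.I) : (x, v) ∈ N.F :=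
  hvx.resolve_right fun h => by simpa [hN.no_pre_I x hx] using (show v ∈ pre N.F x from h)

theorem IsOPN.mem_F_of_connected_of_mem_O (hN : IsOPN N) (hvy : connected N v y)
    (hy : y ∈ N.O) : (v, y) ∈ N.F :=
  hvy.resolve_left fun h => by simpa [hN.no_post_O y hy] using (show v ∈ post N.F y from h)

theorem exists_of_dir_eq_send (h : dir N v = Dir.send) : ∃ y ∈ N.O, (v, y) ∈ N.F := by
  unfold dir at h
  split_ifs at h with h₁
  obtain ⟨y, hvy, hy⟩ := h₁
  exact ⟨y, hy, hvy⟩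

theorem exists_of_dir_eq_receive (h : dir N v = Dir.receive) : ∃ x ∈ N.I, (x, v) ∈ N.F := by
  unfold dir at h
  split_ifs at h with h₁ h₂
  obtain ⟨x, hxv, hx⟩ := h₂
  exact ⟨x, hx, hxv⟩

theorem dir_eq_send (hy : y ∈ N.O) (hvy : (v, y) ∈ N.F) : dir N v = Dir.send :=
  if_pos ⟨y, hvy, hy⟩

theorem Composable.mem_compose2_F_iff (hcomp : Composable N M) (hN : IsOPN N) (hM : IsOPN M)
    (hv : v ∈ N.T) : (∀ z, (z, v) ∈ (compose2 N M).F ↔ (z, v) ∈ N.F) ∧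
      (∀ z, (v, z) ∈ (compose2 N M).F ↔ (v, z) ∈ N.F) := by
  have hvM : v ∉ M.nodes := fun hvM => by
    have hv' : v ∈ (N.I ∪ N.O) ∩ (M.I ∪ M.O) := hcomp.1 ▸ ⟨Or.inr hv, hvM⟩
    exact hN.notMem_iface_of_mem_T hv hv'.1
  have hM_nodes : ∀ a b, (a, b) ∈ M.F → a ∈ M.nodes ∧ b ∈ M.nodes := fun a b h => by
    rcases hM.flow_sub h with ⟨ha, hb⟩ | ⟨ha, hb⟩
    · exact ⟨Or.inl ha, Or.inr hb⟩
    · exact ⟨Or.inr ha, Or.inl hb⟩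
  exact ⟨fun _ => or_iff_left fun h => hvM (hM_nodes _ _ h).2,
    fun _ => or_iff_left fun h => hvM (hM_nodes _ _ h).1⟩

theorem Composable.effect_compose2 (hcomp : Composable N M) (hN : IsOPN N) (hM : IsOPN M)
    (hv : v ∈ N.T) : effect (compose2 N M).F v = effect N.F v := by
  obtain ⟨hpre, hpost⟩ := hcomp.mem_compose2_F_iff hN hM hv
  funext z
  simp only [effect]
  split_ifs <;> simp_all

end OpenNets

section Portnets

variable {N : OPN Node L} {t t₁ v w a b c p x y z : Node}

theorem IsPortnet.exists_skF_post (hN : IsPortnet N) (hv : v ∈ N.T) : ∃ b, (v, b) ∈ skF N := by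
  obtain ⟨i, hi⟩ := hN.init_single
  obtain ⟨f, hf⟩ := hN.fin_single
  have hwfn := hN.isWFN i f hi hf
  obtain ⟨l, -, hchain, -, hlast, hmem⟩ := hwfn.2.2.2.2.2.2 v (Or.inr hv)
  have hvf : v ≠ f := by
    rintro rfl
    exact hN.isOPN.notMem_places hv (Or.inl (Or.inl hwfn.2.1))
  exact hchain.exists_rel_of_mem hmem (by rw [hlast]; exact fun h => hvf (Option.some.inj h).symm)

theorem IsPortnet.eq_of_connected (hN : IsPortnet N) (hv : v ∈ N.T) (hc : c ∈ N.I ∪ N.O)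
    (hvc : connected N v c) (hx : x ∈ N.I ∪ N.O) (hvx : connected N v x) : x = c :=
  (hN.one_iface v hv).unique ⟨hx, hvx⟩ ⟨hc, hvc⟩

theorem IsPortnet.mem_F_pre_iff (hN : IsPortnet N) (hv : v ∈ N.T) (ha : (a, v) ∈ skF N)
    (hc : c ∈ N.I ∪ N.O) (hvc : connected N v c) :
    (z, v) ∈ N.F ↔ z = a ∨ (z = c ∧ c ∈ N.I) := by
  constructor
  · intro h
    rcases hN.isOPN.mem_skF_or_mem_I hv h with hsk | hzI
    · exact Or.inl ((hN.isSM v hv).1 hsk ha)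
    · obtain rfl := hN.eq_of_connected hv hc hvc (Or.inl hzI) (Or.inl h)
      exact Or.inr ⟨rfl, hzI⟩
  · rintro (rfl | ⟨rfl, hzI⟩)
    · exact ha.1
    · exact hN.isOPN.mem_F_of_connected_of_mem_I hvc hzI

theorem IsPortnet.mem_F_post_iff (hN : IsPortnet N) (hv : v ∈ N.T) (hb : (v, b) ∈ skF N)
    (hc : c ∈ N.I ∪ N.O) (hvc : connected N v c) :
    (v, z) ∈ N.F ↔ z = b ∨ (z = c ∧ c ∈ N.O) := by
  constructor
  · intro h
    rcases hN.isOPN.mem_skF_or_mem_O hv h with hsk | hzO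
    · exact Or.inl ((hN.isSM v hv).2 hsk hb)
    · obtain rfl := hN.eq_of_connected hv hc hvc (Or.inr hzO) (Or.inr h)
      exact Or.inr ⟨rfl, hzO⟩
  · rintro (rfl | ⟨rfl, hzO⟩)
    · exact hb.1
    · exact hN.isOPN.mem_F_of_connected_of_mem_O hvc hzO

open Classical in
theorem IsPortnet.effect_eq (hN : IsPortnet N) (hv : v ∈ N.T) (ha : (a, v) ∈ skF N)
    (hb : (v, b) ∈ skF N) (hc : c ∈ N.I ∪ N.O) (hvc : connected N v c) (z : Node) :
    effect N.F v z = (if z = b then 1 else 0) - (if z = a then 1 else 0)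
      + (if z = c ∧ c ∈ N.O then 1 else 0) - (if z = c ∧ c ∈ N.I then 1 else 0) := by
  have hac : a ≠ c := fun h => ha.2.1 (h ▸ hc)
  have hbc : b ≠ c := fun h => hb.2.2 (h ▸ hc)
  simp only [effect, hN.mem_F_pre_iff hv ha hc hvc, hN.mem_F_post_iff hv hb hc hvc]
  split_ifs <;> simp_all

theorem IsPortnet.dir_eq_receive (hN : IsPortnet N) (hv : v ∈ N.T) (hx : x ∈ N.I)
    (hxv : (x, v) ∈ N.F) : dir N v = Dir.receive := by
  have hnsend : ¬(post N.F v ∩ N.O).Nonempty := by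
    rintro ⟨y, hvy, hy⟩
    obtain rfl := hN.eq_of_connected hv (Or.inl hx) (Or.inl hxv) (Or.inr hy) (Or.inr hvy)
    exact hN.isOPN.notMem_O_of_mem_I hx hy
  simp only [dir, if_neg hnsend]
  exact if_pos ⟨x, hxv, hx⟩

theorem IsPortnet.mem_F_of_label_eq_of_mem_I (hN : IsPortnet N) (hv : v ∈ N.T) (hw : w ∈ N.T)
    (hμ : N.μ v = N.μ w) (hx : x ∈ N.I) (hxv : (x, v) ∈ N.F) : (x, w) ∈ N.F :=
  hN.isOPN.mem_F_of_connected_of_mem_I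
    ((hN.same_label_iface v hv w hw hμ x (Or.inl hx)).mp (Or.inl hxv)) hx

theorem IsPortnet.mem_F_of_label_eq_of_mem_O (hN : IsPortnet N) (hv : v ∈ N.T) (hw : w ∈ N.T)
    (hμ : N.μ v = N.μ w) (hy : y ∈ N.O) (hvy : (v, y) ∈ N.F) : (w, y) ∈ N.F :=
  hN.isOPN.mem_F_of_connected_of_mem_O
    ((hN.same_label_iface v hv w hw hμ y (Or.inr hy)).mp (Or.inr hvy)) hy

theorem IsPortnet.exists_diamond (hN : IsPortnet N) (hdia : DiamondProp N) (ht : t ∈ N.T)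
    (hsend : dir N t = Dir.send) (ht₁ : t₁ ∈ N.T) (hrec : dir N t₁ = Dir.receive)
    (hpt : (p, t) ∈ N.F) (hpt₁ : (p, t₁) ∈ N.F) :
    ∃ u u', u ∈ N.T ∧ N.μ t₁ = N.μ u ∧ dir N u = Dir.receive ∧
      u' ∈ N.T ∧ N.μ t = N.μ u' ∧ dir N u' = Dir.send ∧
      (∀ z, (z, u) ∈ N.F → (t, z) ∈ N.F ∨ ((z, t₁) ∈ N.F ∧ (z, t) ∉ N.F)) ∧
      (∀ z, (z, u') ∈ N.F → (t₁, z) ∈ N.F ∨ ((z, t) ∈ N.F ∧ (z, t₁) ∉ N.F)) ∧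
      ∀ z, effect N.F t z + effect N.F u z = effect N.F t₁ z + effect N.F u' z := by
  have hO := hN.isOPN
  obtain ⟨y, hyO, hty⟩ := exists_of_dir_eq_send hsend
  obtain ⟨x, hxI, hxt₁⟩ := exists_of_dir_eq_receive hrec
  have hxt : (x, t) ∉ N.F := fun h => hO.not_both t ht ⟨⟨x, h, hxI⟩, ⟨y, hty, hyO⟩⟩
  have hpP : p ∈ N.P :=
    hO.mem_P_of_mem_F_left ht hpt fun hpI => hO.not_both t ht ⟨⟨p, hpt, hpI⟩, ⟨y, hty, hyO⟩⟩
  obtain ⟨q, hq⟩ := hN.exists_skF_post ht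
  obtain ⟨q', hq'⟩ := hN.exists_skF_post ht₁
  obtain ⟨u, hqu, u', hq'u', ⟨r, hur, hu'r⟩, hμu', hμu⟩ :=
    hdia p hpP t hpt t₁ hpt₁ (by rw [hsend, hrec]; decide) q hq q' hq'
  have hu : u ∈ N.T := hO.mem_T_of_mem_F (hO.mem_places_of_mem_F ht hq.1) hqu.1
  have hu' : u' ∈ N.T := hO.mem_T_of_mem_F (hO.mem_places_of_mem_F ht₁ hq'.1) hq'u'.1
  have hxu : (x, u) ∈ N.F := hN.mem_F_of_label_eq_of_mem_I ht₁ hu hμu hxI hxt₁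
  have hu'y : (u', y) ∈ N.F := hN.mem_F_of_label_eq_of_mem_O ht hu' hμu' hyO hty
  have hyI : y ∉ N.I := fun h => hO.notMem_O_of_mem_I h hyO
  have hpt_sk : (p, t) ∈ skF N := ⟨hpt, hO.notMem_iface_of_mem_P hpP, hO.notMem_iface_of_mem_T ht⟩
  have hpt₁_sk : (p, t₁) ∈ skF N :=
    ⟨hpt₁, hO.notMem_iface_of_mem_P hpP, hO.notMem_iface_of_mem_T ht₁⟩
  refine ⟨u, u', hu, hμu, hN.dir_eq_receive hu hxI hxu, hu', hμu', dir_eq_send hyO hu'y,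
    fun z hz => ?_, fun z hz => ?_, fun z => ?_⟩
  · rcases (hN.mem_F_pre_iff hu hqu (Or.inl hxI) (Or.inl hxu)).1 hz with rfl | ⟨rfl, -⟩
    · exact Or.inl hq.1
    · exact Or.inr ⟨hxt₁, hxt⟩
  · rcases (hN.mem_F_pre_iff hu' hq'u' (Or.inr hyO) (Or.inr hu'y)).1 hz with rfl | ⟨-, hyI'⟩
    · exact Or.inl hq'.1
    · exact absurd hyI' hyI
  · -- both routes take one token from `p` and from `x`, and put one on `r` and on `y`
    simp only [hN.effect_eq ht hpt_sk hq (Or.inr hyO) (Or.inr hty),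
      hN.effect_eq ht₁ hpt₁_sk hq' (Or.inl hxI) (Or.inl hxt₁),
      hN.effect_eq hu hqu hur (Or.inl hxI) (Or.inl hxu),
      hN.effect_eq hu' hq'u' hu'r (Or.inr hyO) (Or.inr hu'y), hxI, hO.notMem_O_of_mem_I hxI,
      hyI, hyO, and_true, and_false, if_false]
    ring

end Portnets

theorem exists_swap_send_receive {N M : OPN Node L} {m m' m₁ : Node → ℕ} {t t₁ : Node}
    (hN : IsPortnet N) (hdia : DiamondProp N) (hM : IsOPN M) (hcomp : Composable N M)
    (ht : t ∈ N.T) (hsend : dir N t = Dir.send) (ht₁ : t₁ ∈ N.T) (hrec : dir N t₁ = Dir.receive)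
    (hfire : Fires (compose2 N M).T (compose2 N M).F m t m')
    (hfire₁ : Fires (compose2 N M).T (compose2 N M).F m t₁ m₁) :
    ∃ u u' m₂, u ∈ N.T ∧ N.μ t₁ = N.μ u ∧ dir N u = Dir.receive ∧
      u' ∈ N.T ∧ N.μ t = N.μ u' ∧ dir N u' = Dir.send ∧
      Fires (compose2 N M).T (compose2 N M).F m' u m₂ ∧
      Fires (compose2 N M).T (compose2 N M).F m₁ u' m₂ := by
  have arcs := fun {v} (hv : v ∈ N.T) => hcomp.mem_compose2_F_iff hN.isOPN hM hv
  by_cases hconf : ∃ p, (p, t) ∈ N.F ∧ (p, t₁) ∈ N.F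
  · obtain ⟨p, hpt, hpt₁⟩ := hconf
    obtain ⟨u, u', hu, hμu, hdiru, hu', hμu', hdiru', hpre, hpre', heff⟩ :=
      hN.exists_diamond hdia ht hsend ht₁ hrec hpt hpt₁
    obtain ⟨m₂, h₁, h₂⟩ := hfire.exists_join hfire₁ (Or.inl hu) (Or.inl hu')
      (fun z hz => by
        simpa only [(arcs ht).1, (arcs ht).2, (arcs ht₁).1] using hpre z (((arcs hu).1 z).1 hz))
      (fun z hz => by
        simpa only [(arcs ht).1, (arcs ht₁).1, (arcs ht₁).2] using hpre' z (((arcs hu').1 z).1 hz))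
      (by simpa only [hcomp.effect_compose2 hN.isOPN hM ht, hcomp.effect_compose2 hN.isOPN hM hu,
        hcomp.effect_compose2 hN.isOPN hM ht₁, hcomp.effect_compose2 hN.isOPN hM hu'] using heff)
    exact ⟨u, u', m₂, hu, hμu, hdiru, hu', hμu', hdiru', h₁, h₂⟩
  · simp only [not_exists, not_and] at hconf
    obtain ⟨m₂, h₁, h₂⟩ := hfire.exists_comm hfire₁ fun p hp hp₁ =>
      hconf p (((arcs ht).1 p).1 hp) (((arcs ht₁).1 p).1 hp₁)
    exact ⟨t₁, t, m₂, ht₁, rfl, hrec, ht, rfl, hsend, h₁, h₂⟩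

theorem diamond_path_general {Node L : Type} (N M : OPN Node L)
    (hN : WellFormed N) (hM : WellFormed M)
    (hcomp : Composable N M)
    (m mn m' : Node → ℕ) (ts : List Node) (t : Node)
    (hseq : FireSeq (compose2 N M).T (compose2 N M).F m ts mn)
    (htsN : ∀ x ∈ ts, x ∈ N.T) (htsrec : ∀ x ∈ ts, dir N x = Dir.receive)
    (htN : t ∈ N.T) (htsend : dir N t = Dir.send)
    (hfire : Fires (compose2 N M).T (compose2 N M).F m t m') :
    ∃ (mn' : Node → ℕ) (ts' : List Node) (tbar : Node),
      FireSeq (compose2 N M).T (compose2 N M).F m' ts' mn' ∧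
      Fires (compose2 N M).T (compose2 N M).F mn tbar mn' ∧
      tbar ∈ N.T ∧ N.μ t = N.μ tbar ∧ dir N t = dir N tbar ∧
      List.Forall₂ (fun a b => b ∈ N.T ∧ N.μ a = N.μ b ∧ dir N a = dir N b) ts ts' := by
  induction hseq generalizing t m' with
  | nil m => exact ⟨m', [], t, .nil m', hfire, htN, rfl, rfl, .nil⟩
  | @cons m m₁ mn t₁ ts hfire₁ _ ih =>
    have hrec : dir N t₁ = Dir.receive := htsrec t₁ List.mem_cons_self
    obtain ⟨u, u', m₂, hu, hμu, hdiru, hu', hμu', hdiru', hfu, hfu'⟩ :=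
      exists_swap_send_receive hN.1 hN.2.2.1 hM.1.isOPN hcomp htN htsend
        (htsN t₁ List.mem_cons_self) hrec hfire hfire₁
    obtain ⟨mn', ts', tbar, hseq', hfbar, htbar, hμ, hdir, hts'⟩ :=
      ih m₂ u' (fun x hx => htsN x (.tail _ hx)) (fun x hx => htsrec x (.tail _ hx)) hu' hdiru' hfu'
    exact ⟨mn', u :: ts', tbar, .cons hfu hseq', hfbar, htbar, hμu'.trans hμ,
      htsend.trans (hdiru'.symm.trans hdir), .cons ⟨hu, hμu, hrec.trans hdiru.symm⟩ hts'⟩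

/-- diamond path lemma: in the composition of a well-formed labeled portnet
`N` and its well-formed partial mirror `(M, φ)`, a sequence of receive transitions of `N`
followed by an enabled send transition `t` of `N` can be reorganized: the send can be
postponed, firing label- and direction-matching transitions instead. -/
theorem diamond_path {Node L : Type} (N M : OPN Node L) (φ : Node → Node)
    (hN : WellFormed N) (hM : WellFormed M)
    (hmir : IsPartialMirror N M φ) (hcomp : Composable N M)
    (m mn m' : Node → ℕ) (ts : List Node) (t : Node)
    (hreach : Reach (compose2 N M).T (compose2 N M).F (mark N.init + mark M.init) m)
    (hseq : FireSeq (compose2 N M).T (compose2 N M).F m ts mn)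
    (htsN : ∀ x ∈ ts, x ∈ N.T) (htsrec : ∀ x ∈ ts, dir N x = Dir.receive)
    (htN : t ∈ N.T) (htsend : dir N t = Dir.send)
    (hfire : Fires (compose2 N M).T (compose2 N M).F m t m') :
    ∃ (mn' : Node → ℕ) (ts' : List Node) (tbar : Node),
      FireSeq (compose2 N M).T (compose2 N M).F m' ts' mn' ∧
      Fires (compose2 N M).T (compose2 N M).F mn tbar mn' ∧
      tbar ∈ N.T ∧ N.μ t = N.μ tbar ∧ dir N t = dir N tbar ∧
      List.Forall₂ (fun a b => b ∈ N.T ∧ N.μ a = N.μ b ∧ dir N a = dir N b) ts ts' :=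
  diamond_path_general N M hN hM hcomp m mn m' ts t hseq htsN htsrec htN htsend hfire

end PortNets
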